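/- arXiv:2408.14124 — 5 statements merged into one kernel-verified Lean document; each statement's English description precedes it below -/
import Mathlib

section
/- Let q ∈ ℕ, q > 0, and p, q', p' ∈ ℤ with q' > 0 and qp' - pq' = 1. Suppose x : ℤ → ℝ satisfies T_{q,p} x = x and x ≪ T_{q',p'} x (meaning x_n < (T_{q',p'} x)_n for every n). Then the chain x ≪ T_{q',p'} x ≪ T_{q',p'}² x ≪ ⋯ ≪ T_{q',p'}^q x = x + 1 holds, i.e., T_{q',p'}^j x ≪ T_{q',p'}^{j+1} x for 0 ≤ j < q and T_{q',p'}^q x = x + 1. -/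
/-
Translations compose additively, so `T_{q',p'}^j = T_{jq', jp'}`. The chain follows by applying the
order-preserving map `T_{q',p'}^j` to `x ≪ T_{q',p'} x`. For the endpoint, `x` is fixed by every
`T_{kq, kp}` with `k ∈ ℤ`; taking `k = q'` and using `q p' = q' p + 1` gives
`T_{q',p'}^q x = T_{q' q, q' p + 1} x = x + 1`.
-/

/-- translation `(T_{q,p} x)_n = x_{n-q} + p` -/
def Ttrans (q p : ℤ) (x : ℤ → ℝ) : ℤ → ℝ := fun n => x (n - q) + p

lemma Ttrans_apply (q p : ℤ) (x : ℤ → ℝ) (n : ℤ) : Ttrans q p x n = x (n - q) + p := rfl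

lemma Ttrans_Ttrans (a b c d : ℤ) (x : ℤ → ℝ) :
    Ttrans a b (Ttrans c d x) = Ttrans (c + a) (d + b) x := by
  funext n
  simp only [Ttrans_apply, sub_add_eq_sub_sub_swap, Int.cast_add, add_assoc]

lemma Ttrans_iterate (q p : ℤ) (j : ℕ) : (Ttrans q p)^[j] = Ttrans (j * q) (j * p) := by
  induction j with
  | zero => funext x n; simp [Ttrans_apply]
  | succ j ih =>
    funext x
    rw [Function.iterate_succ_apply', ih, Ttrans_Ttrans]
    push_cast
    ring_nf

lemma Ttrans_add_right (q p c : ℤ) (x : ℤ → ℝ) (n : ℤ) :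
    Ttrans q (p + c) x n = Ttrans q p x n + c := by
  simp only [Ttrans_apply, Int.cast_add, add_assoc]

lemma Ttrans_lt_Ttrans (q p : ℤ) {x y : ℤ → ℝ} (h : ∀ n, x n < y n) (n : ℤ) :
    Ttrans q p x n < Ttrans q p y n :=
  add_lt_add_left (h (n - q)) _

lemma Ttrans_mul_of_Ttrans_eq_self {q p : ℤ} {x : ℤ → ℝ} (hx : Ttrans q p x = x) (k : ℤ) :
    Ttrans (k * q) (k * p) x = x := by
  have step (m : ℤ) : x (m - q) + p = x m := congrFun hx m
  funext n
  simp only [Ttrans_apply]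
  induction k using Int.induction_on with
  | zero => simp
  | succ k ih =>
    rw [← ih, ← step (n - k * q)]
    push_cast
    ring_nf
  | pred k ih =>
    rw [← ih, ← step (n - (-k - 1) * q)]
    push_cast
    ring_nf

theorem stmt2_general (q : ℕ) (p q' p' : ℤ)
    (hFarey : (q : ℤ) * p' - p * q' = 1) (x : ℤ → ℝ)
    (hx : Ttrans (q : ℤ) p x = x)
    (hlt : ∀ n : ℤ, x n < Ttrans q' p' x n) :
    (∀ j : ℕ, j < q →
        ∀ n : ℤ, ((Ttrans q' p')^[j] x) n < ((Ttrans q' p')^[j + 1] x) n) ∧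
      (Ttrans q' p')^[q] x = fun n => x n + 1 := by
  refine ⟨fun j _ n => ?_, ?_⟩
  · rw [Function.iterate_succ_apply, Ttrans_iterate]
    exact Ttrans_lt_Ttrans _ _ hlt n
  · have hperiod := Ttrans_mul_of_Ttrans_eq_self hx q'
    funext n
    rw [Ttrans_iterate, mul_comm (q : ℤ) q', show (q : ℤ) * p' = q' * p + 1 by linarith,
      Ttrans_add_right, hperiod, Int.cast_one]

theorem stmt2 (q : ℕ) (hq : 0 < q) (p q' p' : ℤ) (hq' : 0 < q')
    (hFarey : (q : ℤ) * p' - p * q' = 1) (x : ℤ → ℝ)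
    (hx : Ttrans (q : ℤ) p x = x)
    (hlt : ∀ n : ℤ, x n < Ttrans q' p' x n) :
    (∀ j : ℕ, j < q →
        ∀ n : ℤ, ((Ttrans q' p')^[j] x) n < ((Ttrans q' p')^[j + 1] x) n) ∧
      (Ttrans q' p')^[q] x = fun n => x n + 1 :=
  stmt2_general q p q' p' hFarey x hx hlt
end

section
/- Let h : ℝ × ℝ → ℝ be continuous with h(x+1, x'+1) = h(x, x'), let F > 0, and set h_F(x, x') = h(x, x') - Fx. For s > 0 define E₁(s) = sup{|h(x, x'+1) - h(x, x')| : |x' - x| ≤ s} and E₂(s) = sup{|h(x+1, x') - h(x, x')| : |x' - x| ≤ s}. Then for any finite segment x₀, x₁, …, x_L with |x_{i+1} - x_i| ≤ s for all i, the modified segment x₀, x₁+1, …, x_{L-1}+1, x_L satisfies W̃ - W ≤ E₁(s) + E₂(s) - (L-2)F, where W = Σ_{i=0}^{L-1} h_F(x_i, x_{i+1}) and W̃ is the corresponding sum for the modified segment. In particular, if L > 2 + (E₁(s)+E₂(s))/F then W̃ < W, so no configuration with spacings bounded by s minimises the tilted energy over segments of length greater than 2 + (E₁(s)+E₂(s))/F.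 -/
/-!
Shifting the interior points of a segment by one period leaves every interior bond unchanged,
by periodicity of `h`, while each of the `L - 1` shifted points pays the tilt `F`. Only the two
boundary bonds change their `h`-value, by at most `E₁` and `E₂`, so the energy drops by at least
`(L - 1) F - E₁ - E₂`.
-/

open Finset

noncomputable section

def tiltedEnergy (h : ℝ → ℝ → ℝ) (F : ℝ) (L : ℕ) (x : ℕ → ℝ) : ℝ :=
  ∑ i ∈ range L, (h (x i) (x (i + 1)) - F * x i)

def shiftInterior (L : ℕ) (x : ℕ → ℝ) : ℕ → ℝ :=
  fun i => if 1 ≤ i ∧ i ≤ L - 1 then x i + 1 else x i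

end

theorem tiltedEnergy_shiftInterior_sub (h : ℝ → ℝ → ℝ)
    (hper : ∀ x x' : ℝ, h (x + 1) (x' + 1) = h x x') (F : ℝ) (n : ℕ) (x : ℕ → ℝ) :
    tiltedEnergy h F (n + 2) (shiftInterior (n + 2) x) - tiltedEnergy h F (n + 2) x =
      (h (x 0) (x 1 + 1) - h (x 0) (x 1)) +
        (h (x (n + 1) + 1) (x (n + 2)) - h (x (n + 1)) (x (n + 2))) - (n + 1) * F := by
  have hbulk : ∀ i ∈ range n,
      (h (shiftInterior (n + 2) x (i + 1)) (shiftInterior (n + 2) x (i + 2)) -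
          F * shiftInterior (n + 2) x (i + 1)) -
        (h (x (i + 1)) (x (i + 2)) - F * x (i + 1)) = -F := by
    intro i hi
    have hi : i < n := mem_range.mp hi
    simp only [shiftInterior, if_pos (show 1 ≤ i + 1 ∧ i + 1 ≤ n + 2 - 1 by omega),
      if_pos (show 1 ≤ i + 2 ∧ i + 2 ≤ n + 2 - 1 by omega), hper]
    ring
  simp only [tiltedEnergy, ← sum_sub_distrib]
  rw [sum_range_succ, sum_range_succ', sum_congr rfl hbulk, sum_const, card_range]
  simp only [shiftInterior, show n + 2 - 1 = n + 1 by omega, nsmul_eq_mul]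
  norm_num
  ring

theorem stmt5_general (h : ℝ → ℝ → ℝ)
    (hper : ∀ x x' : ℝ, h (x + 1) (x' + 1) = h x x')
    (F : ℝ) (hF : 0 < F) (s : ℝ) (E1 E2 : ℝ)
    (hE1 : ∀ x x' : ℝ, |x' - x| ≤ s → |h x (x' + 1) - h x x'| ≤ E1)
    (hE2 : ∀ x x' : ℝ, |x' - x| ≤ s → |h (x + 1) x' - h x x'| ≤ E2)
    (L : ℕ) (hL : 2 ≤ L) (x : ℕ → ℝ) (hx : ∀ i < L, |x (i + 1) - x i| ≤ s) :
    letI xt : ℕ → ℝ := fun i => if 1 ≤ i ∧ i ≤ L - 1 then x i + 1 else x i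
    letI W : ℝ := ∑ i ∈ Finset.range L, (h (x i) (x (i + 1)) - F * x i)
    letI Wt : ℝ := ∑ i ∈ Finset.range L, (h (xt i) (xt (i + 1)) - F * xt i)
    Wt - W ≤ E1 + E2 - ((L : ℝ) - 2) * F ∧
      ((L : ℝ) > 2 + (E1 + E2) / F → Wt < W) := by
  show tiltedEnergy h F L (shiftInterior L x) - tiltedEnergy h F L x ≤ _ ∧
    (_ → tiltedEnergy h F L (shiftInterior L x) < tiltedEnergy h F L x)
  obtain ⟨n, rfl⟩ : ∃ n, L = n + 2 := ⟨L - 2, by omega⟩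
  have hfirst := (abs_le.mp (hE1 _ _ (hx 0 (by omega)))).2
  have hlast := (abs_le.mp (hE2 _ _ (hx (n + 1) (by omega)))).2
  have hdrop := tiltedEnergy_shiftInterior_sub h hper F n x
  push_cast at hfirst hlast ⊢
  refine ⟨by linarith, fun hlong => ?_⟩
  have : E1 + E2 < n * F := (div_lt_iff₀ hF).mp (by linarith)
  linarith

theorem stmt5 (h : ℝ → ℝ → ℝ)
    (hcont : Continuous fun p : ℝ × ℝ => h p.1 p.2)
    (hper : ∀ x x' : ℝ, h (x + 1) (x' + 1) = h x x')
    (F : ℝ) (hF : 0 < F) (s : ℝ) (hs : 0 < s) (E1 E2 : ℝ)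
    (hE1 : ∀ x x' : ℝ, |x' - x| ≤ s → |h x (x' + 1) - h x x'| ≤ E1)
    (hE2 : ∀ x x' : ℝ, |x' - x| ≤ s → |h (x + 1) x' - h x x'| ≤ E2)
    (L : ℕ) (hL : 2 ≤ L) (x : ℕ → ℝ) (hx : ∀ i < L, |x (i + 1) - x i| ≤ s) :
    letI xt : ℕ → ℝ := fun i => if 1 ≤ i ∧ i ≤ L - 1 then x i + 1 else x i
    letI W : ℝ := ∑ i ∈ Finset.range L, (h (x i) (x (i + 1)) - F * x i)
    letI Wt : ℝ := ∑ i ∈ Finset.range L, (h (xt i) (xt (i + 1)) - F * xt i)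
    Wt - W ≤ E1 + E2 - ((L : ℝ) - 2) * F ∧
      ((L : ℝ) > 2 + (E1 + E2) / F → Wt < W) :=
  stmt5_general h hper F hF s E1 E2 hE1 hE2 L hL x hx
end

section
/- Let p, q be integers, q > 0. Let x⁻, x⁺, x* : ℤ → ℝ with x⁻, x⁺ of type (p,q) (T_{q,p}x^± = x^±), x⁻ ≪ x* ≪ x⁺, and suppose the translates satisfy T_{q,p}^k x* → x⁻ pointwise as k → +∞ and T_{q,p}^{-k} x* → x⁺ pointwise as k → +∞, with T_{q,p} x* ≤ x*. Then the telescoping identity Σ_{i∈ℤ} ((T_{q,p}^{-1} x*)_i − x*_i) = Σ_{i=1}^{q} (x⁺_i − x⁻_i) holds, and in particular this sum is finite. Consequently, for any configuration z with x* ≤ z ≤ T_{q,p}^{-1} x*, the sequence (z_i − x*_i)_{i∈ℤ} is summable and lies in ℓ². -/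
/-!
The gaps `(T⁻¹x*)ᵢ - x*ᵢ = x*(i+q) - p - x*ᵢ` are nonnegative because `T x* ≤ x*`, so it suffices
to compute the limit of their partial sums over the windows `(-nq, nq]`, which exhaust `ℤ`.
Shifting by `q` telescopes such a window down to its two end blocks, so the partial sum equals
`∑_{i=1}^q ((T^{-n}x*)ᵢ - (Tⁿx*)ᵢ)`, which tends to `∑_{i=1}^q (x⁺ᵢ - x⁻ᵢ)`. Any `z` between `x*`
and `T⁻¹x*` is then dominated by this summable sequence, hence in `ℓ¹ ⊆ ℓ²`.
-/

open Finset Filter Topology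
open scoped ENNReal

theorem hasSum_of_tendsto_sum_of_nonneg {ι : Type*} {f : ι → ℝ} (hf : 0 ≤ f)
    {s : ℕ → Finset ι} (hs : Tendsto s atTop atTop) {a : ℝ}
    (h : Tendsto (fun n => ∑ i ∈ s n, f i) atTop (𝓝 a)) : HasSum f a := by
  have hsum : Summable f := summable_of_sum_le hf fun u =>
    ge_of_tendsto h <| (hs.eventually (eventually_ge_atTop u)).mono fun _ hu =>
      sum_le_sum_of_subset_of_nonneg hu fun i _ _ => hf i
  have := hsum.hasSum
  rwa [tendsto_nhds_unique (this.comp hs) h] at this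

theorem memℓp_of_summable_norm {ι E : Type*} [NormedAddCommGroup E] {f : ι → E}
    (hf : Summable fun i => ‖f i‖) {p : ℝ≥0∞} (hp : 1 ≤ p) : Memℓp f p :=
  Memℓp.of_exponent_ge (memℓp_gen (by simpa using hf)) hp

theorem tendsto_Ioc_neg_mul_atTop {q : ℤ} (hq : 0 < q) :
    Tendsto (fun n : ℕ => Ioc (-(n * q)) (n * q)) atTop atTop := by
  refine tendsto_atTop_finset_of_monotone (fun m n hmn => ?_) fun i => ⟨i.natAbs + 1, ?_⟩
  · have : (m : ℤ) * q ≤ n * q := by gcongr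
    exact Ioc_subset_Ioc (by omega) this
  · have hle := le_mul_of_one_le_right (by positivity : (0 : ℤ) ≤ (i.natAbs + 1 : ℕ)) hq
    simp only [mem_Ioc]
    push_cast at hle ⊢
    have := abs_le.mp (le_refl |i|)
    omega

theorem sum_Ioc_sub_shift {M : Type*} [AddCommGroup M] (g : ℤ → M) {a b q : ℤ}
    (hab : a ≤ b) (hq : 0 ≤ q) :
    ∑ i ∈ Ioc a b, (g (i + q) - g i) = ∑ i ∈ Ioc 0 q, (g (i + b) - g (i + a)) := by
  have shift (c d e : ℤ) : ∑ i ∈ Ioc c d, g (i + e) = ∑ i ∈ Ioc (c + e) (d + e), g i := by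
    rw [← map_add_right_Ioc, sum_map]; rfl
  have split (c d e : ℤ) (hcd : c ≤ d) (hde : d ≤ e) :
      ∑ i ∈ Ioc c e, g i = ∑ i ∈ Ioc c d, g i + ∑ i ∈ Ioc d e, g i := by
    rw [← sum_union (Ioc_disjoint_Ioc_of_le le_rfl), Ioc_union_Ioc_eq_Ioc hcd hde]
  have h := (split a b (b + q) hab (by omega)).symm.trans
    (split a (a + q) (b + q) (by omega) (by omega))
  rw [sum_sub_distrib, sum_sub_distrib, shift, shift, shift, zero_add, zero_add, add_comm q b,
    add_comm q a, sub_eq_sub_iff_add_eq_add]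
  exact (add_comm _ _).trans (h.symm.trans (add_comm _ _))

theorem sum_Ioc_translate_sub_self (g : ℤ → ℝ) (c : ℝ) {q : ℤ} (hq : 0 ≤ q) (n : ℕ) :
    ∑ i ∈ Ioc (-(n * q)) (n * q), (g (i + q) - c - g i)
      = ∑ i ∈ Ioc 0 q, ((g (i + n * q) - n * c) - (g (i - n * q) + n * c)) := by
  have card (a b : ℤ) (hab : a ≤ b) : ((Ioc a b).card : ℝ) = b - a :=
    mod_cast Int.card_Ioc_of_le (h := hab)
  have hnq : 0 ≤ (n : ℤ) * q := by positivity
  calc _ = ∑ i ∈ Ioc (-(n * q)) (n * q), (g (i + q) - g i)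
          - ∑ i ∈ Ioc (-(n * q)) (n * q), c := by
        rw [← sum_sub_distrib]; simp only [sub_right_comm]
    _ = ∑ i ∈ Ioc 0 q, (g (i + n * q) - g (i - n * q)) - ∑ i ∈ Ioc 0 q, 2 * n * c := by
        rw [sum_Ioc_sub_shift g (by omega) hq, sum_const, sum_const, nsmul_eq_mul, nsmul_eq_mul,
          card _ _ (by omega), card _ _ hq]
        simp only [← sub_eq_add_neg]
        push_cast
        ring
    _ = _ := by rw [← sum_sub_distrib]; congr! 1; ring

theorem stmt9_general (q p : ℤ) (hq : 0 < q) (xm xp xs : ℤ → ℝ)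
    (hmono : ∀ n : ℤ, xs (n - q) + p ≤ xs n)
    (hlimm : ∀ i : ℤ, Filter.Tendsto (fun k : ℕ => xs (i - k * q) + k * p)
      Filter.atTop (nhds (xm i)))
    (hlimp : ∀ i : ℤ, Filter.Tendsto (fun k : ℕ => xs (i + k * q) - k * p)
      Filter.atTop (nhds (xp i))) :
    HasSum (fun i : ℤ => (xs (i + q) - p) - xs i)
      (∑ i ∈ Finset.Icc (1 : ℤ) q, (xp i - xm i)) ∧
      ∀ z : ℤ → ℝ, (∀ n : ℤ, xs n ≤ z n) → (∀ n : ℤ, z n ≤ xs (n + q) - p) →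
        Summable (fun i : ℤ => z i - xs i) ∧ Memℓp (fun i : ℤ => z i - xs i) 2 := by
  have hgap (i : ℤ) : 0 ≤ (xs (i + q) - p) - xs i := by
    have := hmono (i + q)
    rw [add_sub_cancel_right] at this
    linarith
  have hsum : HasSum (fun i : ℤ => (xs (i + q) - p) - xs i)
      (∑ i ∈ Icc (1 : ℤ) q, (xp i - xm i)) := by
    refine hasSum_of_tendsto_sum_of_nonneg hgap (tendsto_Ioc_neg_mul_atTop hq) ?_
    rw [show Icc (1 : ℤ) q = Ioc 0 q by rw [← Icc_add_one_left_eq_Ioc, zero_add]]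
    simp only [sum_Ioc_translate_sub_self xs p hq.le]
    exact tendsto_finsetSum _ fun i _ => (hlimp i).sub (hlimm i)
  refine ⟨hsum, fun z hz hz' => ?_⟩
  have hz0 : 0 ≤ fun i => z i - xs i := fun i => sub_nonneg.mpr (hz i)
  have hzs : Summable fun i => z i - xs i :=
    hsum.summable.of_nonneg_of_le hz0 fun i => by linarith [hz' i]
  exact ⟨hzs, memℓp_of_summable_norm (by simpa using hzs.abs) one_le_two⟩

theorem stmt9 (q p : ℤ) (hq : 0 < q) (xm xp xs : ℤ → ℝ)
    (hxm : ∀ n : ℤ, xm (n - q) + p = xm n) (hxp : ∀ n : ℤ, xp (n - q) + p = xp n)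
    (horder : ∀ n : ℤ, xm n < xs n ∧ xs n < xp n)
    (hmono : ∀ n : ℤ, xs (n - q) + p ≤ xs n)
    (hlimm : ∀ i : ℤ, Filter.Tendsto (fun k : ℕ => xs (i - k * q) + k * p)
      Filter.atTop (nhds (xm i)))
    (hlimp : ∀ i : ℤ, Filter.Tendsto (fun k : ℕ => xs (i + k * q) - k * p)
      Filter.atTop (nhds (xp i))) :
    HasSum (fun i : ℤ => (xs (i + q) - p) - xs i)
      (∑ i ∈ Finset.Icc (1 : ℤ) q, (xp i - xm i)) ∧
      ∀ z : ℤ → ℝ, (∀ n : ℤ, xs n ≤ z n) → (∀ n : ℤ, z n ≤ xs (n + q) - p) →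
        Summable (fun i : ℤ => z i - xs i) ∧ Memℓp (fun i : ℤ => z i - xs i) 2 :=
  stmt9_general q p hq xm xp xs hmono hlimm hlimp
end

section
/- Let M be a real symmetric tridiagonal n×n matrix whose off-diagonal entries are all strictly positive. If M has a positive eigenvalue, then its largest eigenvalue μ_max > 0 admits an eigenvector ξ ∈ ℝⁿ with ξ_i > 0 for all i. -/
/-! The largest eigenvalue of the real symmetric matrix `M` is the maximum of `x ⬝ᵥ M *ᵥ x` on the
unit sphere, and every maximiser is an eigenvector for it. As the off-diagonal entries of `M` are
nonnegative, passing from a maximiser `x` to `|x|` does not decrease the quadratic form, so `|x|` is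
a nonnegative eigenvector for the largest eigenvalue. If `|x|` vanished at `i`, row `i` of
`M *ᵥ |x| = μ • |x|` would be a vanishing sum of nonnegative terms, so `|x|` would vanish at every
`j` with `0 < M i j`; along the path graph of the tridiagonal pattern this spreads to all indices. -/

open Metric Module.End Matrix WithLp
open scoped RealInnerProductSpace

section Variational

variable {E : Type*} [NormedAddCommGroup E] [InnerProductSpace ℝ E] {T : E →ₗ[ℝ] E} {x : E}

theorem LinearMap.eigenvalue_le_inner_of_isMaxOn (hx : IsMaxOn (fun y ↦ ⟪T y, y⟫) (sphere 0 1) x)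
    {μ : ℝ} {u : E} (hu : u ≠ 0) (hTu : T u = μ • u) : μ ≤ ⟪T x, x⟫ := by
  have hu' : ‖u‖⁻¹ • u ∈ sphere (0 : E) 1 := by simp [norm_smul, hu]
  calc μ = ⟪T (‖u‖⁻¹ • u), ‖u‖⁻¹ • u⟫ := by
        have : ‖u‖ ≠ 0 := norm_ne_zero_iff.mpr hu
        simp only [map_smul, hTu, real_inner_smul_left, real_inner_smul_right,
          real_inner_self_eq_norm_sq]
        field_simp
    _ ≤ ⟪T x, x⟫ := hx hu'

theorem LinearMap.IsSymmetric.apply_eq_inner_smul_of_isMaxOn [FiniteDimensional ℝ E]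
    (hT : T.IsSymmetric) (hx1 : ‖x‖ = 1) (hx : IsMaxOn (fun y ↦ ⟪T y, y⟫) (sphere 0 1) x) :
    T x = ⟪T x, x⟫ • x := by
  have hx0 : x ≠ 0 := norm_ne_zero_iff.mp (by simp [hx1])
  obtain ⟨c, hc⟩ : ∃ c : ℝ, T x = c • x :=
    ⟨_, (hT.toSelfAdjoint.prop.hasEigenvector_of_isMaxOn hx0 (by rwa [hx1])).apply_eq_smul⟩
  rw [hc, real_inner_smul_left, real_inner_self_eq_norm_sq, hx1, one_pow, mul_one]

end Variational

theorem SimpleGraph.Reachable.imp_of_adj {V : Type*} {G : SimpleGraph V} {p : V → Prop}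
    (h : ∀ u v, G.Adj u v → p u → p v) {u v : V} (huv : G.Reachable u v) (hu : p u) : p v := by
  rw [reachable_eq_reflTransGen] at huv
  induction huv with
  | refl => exact hu
  | tail _ hadj ih => exact h _ _ hadj ih

namespace Matrix

variable {ι : Type*} [Fintype ι] {M : Matrix ι ι ℝ}

theorem dotProduct_mulVec_self_le_abs (hM : ∀ i j, i ≠ j → 0 ≤ M i j) (v : ι → ℝ) :
    v ⬝ᵥ M *ᵥ v ≤ |v| ⬝ᵥ M *ᵥ |v| := by
  simp only [dotProduct, mulVec, Finset.mul_sum, Pi.abs_apply]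
  refine Finset.sum_le_sum fun i _ ↦ Finset.sum_le_sum fun j _ ↦ ?_
  have key : M i j * (v i * v j) ≤ M i j * (|v i| * |v j|) := by
    rcases eq_or_ne i j with rfl | hij
    · rw [abs_mul_abs_self]
    · exact mul_le_mul_of_nonneg_left (abs_mul (v i) (v j) ▸ le_abs_self _) (hM i j hij)
  linear_combination key

theorem inner_toEuclideanLin_self [DecidableEq ι] (x : EuclideanSpace ℝ ι) :
    ⟪toEuclideanLin M x, x⟫ = ofLp x ⬝ᵥ M *ᵥ ofLp x := by
  simp [EuclideanSpace.inner_eq_star_dotProduct]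

theorem IsSymm.exists_nonneg_eigenvector_forall_le [Nonempty ι] (hsymm : M.IsSymm)
    (hM : ∀ i j, i ≠ j → 0 ≤ M i j) :
    ∃ μmax : ℝ, ∃ w : ι → ℝ, 0 ≤ w ∧ w ≠ 0 ∧ M *ᵥ w = μmax • w ∧
      ∀ μ (v : ι → ℝ), v ≠ 0 → M *ᵥ v = μ • v → μ ≤ μmax := by
  classical
  set T := toEuclideanLin M
  have hT : T.IsSymmetric := isSymmetric_toEuclideanLin_iff.mpr (isHermitian_iff_isSymm.mpr hsymm)
  obtain ⟨x, hx1, hxmax⟩ := (isCompact_sphere (0 : EuclideanSpace ℝ ι) 1).exists_isMaxOn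
    (NormedSpace.sphere_nonempty.mpr zero_le_one)
    (T.continuous_of_finiteDimensional.inner (𝕜 := ℝ) continuous_id).continuousOn
  set y : EuclideanSpace ℝ ι := toLp 2 |ofLp x|
  have hy1 : ‖y‖ = 1 := by
    rw [← mem_sphere_zero_iff_norm.mp hx1, EuclideanSpace.norm_eq, EuclideanSpace.norm_eq]
    simp [y]
  have hymax : IsMaxOn (fun z ↦ ⟪T z, z⟫) (sphere 0 1) y := fun z hz ↦ (hxmax hz).trans <| by
    simpa [T, y, inner_toEuclideanLin_self] using dotProduct_mulVec_self_le_abs hM (ofLp x)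
  refine ⟨⟪T y, y⟫, ofLp y, abs_nonneg _, ?_, ?_, ?_⟩
  · intro h
    have hy0 : y = 0 := congrArg (toLp 2) h
    simp [hy0] at hy1
  · exact congrArg ofLp (hT.apply_eq_inner_smul_of_isMaxOn hy1 hymax)
  · intro μ v hv hMv
    exact LinearMap.eigenvalue_le_inner_of_isMaxOn hymax (u := toLp 2 v) (by simpa using hv)
      (congrArg (toLp 2) hMv)

theorem eq_zero_of_pos_of_mulVec_eq_smul (hM : ∀ i j, i ≠ j → 0 ≤ M i j) {μ : ℝ} {w : ι → ℝ}
    (hw : 0 ≤ w) (hMw : M *ᵥ w = μ • w) {i j : ι} (hwi : w i = 0) (hMij : 0 < M i j) :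
    w j = 0 := by
  have hsum : ∑ k, M i k * w k = 0 := by
    simpa [mulVec, dotProduct, hwi] using congrFun hMw i
  have hterm : ∀ k ∈ Finset.univ, 0 ≤ M i k * w k := by
    intro k _
    rcases eq_or_ne i k with rfl | hik
    · simp [hwi]
    · exact mul_nonneg (hM i k hik) (hw k)
  have := (Finset.sum_eq_zero_iff_of_nonneg hterm).mp hsum j (Finset.mem_univ j)
  exact (mul_eq_zero.mp this).resolve_left hMij.ne'

theorem pos_of_nonneg_of_mulVec_eq_smul {G : SimpleGraph ι} (hG : G.Preconnected)
    (hM : ∀ i j, i ≠ j → 0 ≤ M i j) (hMG : ∀ i j, G.Adj i j → 0 < M i j) {μ : ℝ} {w : ι → ℝ}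
    (hw : 0 ≤ w) (hw0 : w ≠ 0) (hMw : M *ᵥ w = μ • w) (i : ι) : 0 < w i := by
  refine (hw i).lt_of_ne fun hwi ↦ hw0 (funext fun j ↦ ?_)
  exact (hG i j).imp_of_adj (p := fun k ↦ w k = 0)
    (fun _ _ hadj hk ↦ eq_zero_of_pos_of_mulVec_eq_smul hM hw hMw hk (hMG _ _ hadj)) hwi.symm

end Matrix

theorem stmt12_general (n : ℕ) (M : Matrix (Fin n) (Fin n) ℝ)
    (hsymm : M.IsSymm)
    (htri : ∀ i j : Fin n, 1 < ((i : ℤ) - (j : ℤ)).natAbs → M i j = 0)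
    (hoff : ∀ i j : Fin n, ((i : ℤ) - (j : ℤ)).natAbs = 1 → 0 < M i j)
    (hpos : ∃ μ : ℝ, 0 < μ ∧ ∃ v : Fin n → ℝ, v ≠ 0 ∧ M.mulVec v = μ • v) :
    ∃ μmax : ℝ, 0 < μmax ∧
      (∃ ξ : Fin n → ℝ, (∀ i, 0 < ξ i) ∧ M.mulVec ξ = μmax • ξ) ∧
      (∀ μ : ℝ, (∃ v : Fin n → ℝ, v ≠ 0 ∧ M.mulVec v = μ • v) → μ ≤ μmax) := by
  obtain ⟨μ₀, hμ₀, v₀, hv₀, hMv₀⟩ := hpos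
  obtain ⟨i₀, -⟩ := Function.ne_iff.mp hv₀
  have : Nonempty (Fin n) := ⟨i₀⟩
  have hM : ∀ i j : Fin n, i ≠ j → 0 ≤ M i j := by
    intro i j hij
    have : (i : ℕ) ≠ j := Fin.val_ne_of_ne hij
    rcases (by omega : ((i : ℤ) - j).natAbs = 1 ∨ 1 < ((i : ℤ) - j).natAbs) with h | h
    · exact (hoff i j h).le
    · exact (htri i j h).ge
  have hpath : ∀ i j, (SimpleGraph.pathGraph n).Adj i j → 0 < M i j := fun i j h ↦
    hoff i j (by rw [SimpleGraph.pathGraph_adj] at h; omega)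
  obtain ⟨μmax, w, hw, hw0, hMw, hle⟩ := hsymm.exists_nonneg_eigenvector_forall_le hM
  refine ⟨μmax, hμ₀.trans_le (hle μ₀ v₀ hv₀ hMv₀), ⟨w, ?_, hMw⟩, fun μ ⟨v, hv, hMv⟩ ↦ hle μ v hv hMv⟩
  exact pos_of_nonneg_of_mulVec_eq_smul (SimpleGraph.pathGraph_preconnected n) hM hpath hw hw0 hMw

theorem stmt12 (n : ℕ) (hn : 0 < n) (M : Matrix (Fin n) (Fin n) ℝ)
    (hsymm : M.IsSymm)
    (htri : ∀ i j : Fin n, 1 < ((i : ℤ) - (j : ℤ)).natAbs → M i j = 0)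
    (hoff : ∀ i j : Fin n, ((i : ℤ) - (j : ℤ)).natAbs = 1 → 0 < M i j)
    (hpos : ∃ μ : ℝ, 0 < μ ∧ ∃ v : Fin n → ℝ, v ≠ 0 ∧ M.mulVec v = μ • v) :
    ∃ μmax : ℝ, 0 < μmax ∧
      (∃ ξ : Fin n → ℝ, (∀ i, 0 < ξ i) ∧ M.mulVec ξ = μmax • ξ) ∧
      (∀ μ : ℝ, (∃ v : Fin n → ℝ, v ≠ 0 ∧ M.mulVec v = μ • v) → μ ≤ μmax) :=
  stmt12_general n M hsymm htri hoff hpos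
end

section
/- Let ω ∈ ℝ and let x : ℤ → ℝ be a configuration such that the set of translates {T_{q,p} x : p, q ∈ ℤ} is totally ordered (x is Birkhoff) and suppose x has mean spacing ω, i.e., (x_n − x₀)/n → ω as n → ±∞. Then for all integers p, q with q > 0: if p/q < ω then T_{q,p} x ≤ x, and if p/q > ω then T_{q,p} x ≥ x. Consequently |x_n − x₀ − nω| ≤ 1 for all n, i.e., n ↦ x_n − nω is bounded. -/
/-!
By the Birkhoff property every translate `T_{q,p} x` lies on one side of `x`. Iterating
`x n ≤ x (n - q) + p` gives `x (k q) ≤ x 0 + k p`, so such a translate forces `ω ≤ p / q`;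
hence the side is dictated by comparing `p / q` with `ω`. For fixed `q > 0` this pins the
increment `x m - x (m - q)` between the integers adjacent to `q ω`, i.e. within `1` of `q ω`.
-/

open Filter

section

variable {x : ℤ → ℝ} {ω : ℝ} {p q : ℤ}

lemma le_add_mul_of_le_translate (h : ∀ n, x n ≤ x (n - q) + p) (k : ℕ) :
    x (k * q) ≤ x 0 + k * p := by
  induction k with
  | zero => simp
  | succ k ih =>
    have step := h ((k + 1) * q)
    rw [show ((k : ℤ) + 1) * q - q = k * q by ring] at step
    push_cast
    linarith

lemma mean_le_of_le_translate (hq : 0 < q)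
    (hmean : Tendsto (fun n : ℕ => (x n - x 0) / n) atTop (nhds ω))
    (h : ∀ n, x n ≤ x (n - q) + p) : ω ≤ p / q := by
  lift q to ℕ using hq.le
  have hq' : 0 < q := by exact_mod_cast hq
  have hsub : Tendsto (fun k : ℕ => k * q) atTop atTop := tendsto_id.atTop_mul_const' hq'
  refine le_of_tendsto (hmean.comp hsub) ?_
  filter_upwards [eventually_gt_atTop 0] with k hk
  have hkq : (0 : ℝ) < k * q := by positivity
  have bound := le_add_mul_of_le_translate h k
  simp only [Function.comp_apply, Nat.cast_mul, Int.cast_natCast] at bound ⊢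
  rw [div_le_div_iff₀ hkq (by positivity)]
  nlinarith

lemma le_mean_of_translate_le (hq : 0 < q)
    (hmean : Tendsto (fun n : ℕ => (x n - x 0) / n) atTop (nhds ω))
    (h : ∀ n, x (n - q) + p ≤ x n) : p / q ≤ ω := by
  have hmean_neg : Tendsto (fun n : ℕ => (-x n - -x 0) / n) atTop (nhds (-ω)) := by
    refine hmean.neg.congr fun n => ?_
    rw [← neg_div, neg_sub, neg_sub_neg]
  have := mean_le_of_le_translate (x := -x) (p := -p) hq hmean_neg (fun n => by
    simp only [Pi.neg_apply, Int.cast_neg]; linarith [h n])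
  rw [Int.cast_neg, neg_div] at this
  linarith

lemma abs_sub_le_one_of_int_bounds {d a : ℝ} (hlow : ∀ p : ℤ, (p : ℝ) < a → p ≤ d)
    (hup : ∀ p : ℤ, a < p → d ≤ p) : |d - a| ≤ 1 := by
  have h1 := hlow (⌈a⌉ - 1) (by push_cast; linarith [Int.ceil_lt_add_one a])
  have h2 := hup (⌊a⌋ + 1) (by push_cast; exact Int.lt_floor_add_one a)
  push_cast at h1 h2
  rw [abs_le]
  constructor <;> linarith [Int.le_ceil a, Int.floor_le a]

end

theorem stmt18_general (x : ℤ → ℝ) (ω : ℝ)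
    (hBirk : ∀ q p : ℤ, (∀ n : ℤ, x (n - q) + p ≤ x n) ∨ (∀ n : ℤ, x n ≤ x (n - q) + p))
    (hmeanp : Filter.Tendsto (fun n : ℕ => (x n - x 0) / n) Filter.atTop (nhds ω)) :
    (∀ p q : ℤ, 0 < q → (p : ℝ) / q < ω → ∀ n : ℤ, x (n - q) + p ≤ x n) ∧
      (∀ p q : ℤ, 0 < q → ω < (p : ℝ) / q → ∀ n : ℤ, x n ≤ x (n - q) + p) ∧
      (∀ n : ℤ, |x n - x 0 - n * ω| ≤ 1) := by
  have below (p q : ℤ) (hq : 0 < q) (hpq : (p : ℝ) / q < ω) : ∀ n, x (n - q) + p ≤ x n :=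
    (hBirk q p).resolve_right fun h => (mean_le_of_le_translate hq hmeanp h).not_gt hpq
  have above (p q : ℤ) (hq : 0 < q) (hpq : ω < (p : ℝ) / q) : ∀ n, x n ≤ x (n - q) + p :=
    (hBirk q p).resolve_left fun h => (le_mean_of_translate_le hq hmeanp h).not_gt hpq
  have increment (q m : ℤ) (hq : 0 < q) : |x m - x (m - q) - q * ω| ≤ 1 := by
    have hq' : (0 : ℝ) < q := by exact_mod_cast hq
    refine abs_sub_le_one_of_int_bounds (fun p hp => ?_) (fun p hp => ?_)
    · linarith [below p q hq ((div_lt_iff₀' hq').2 hp) m]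
    · linarith [above p q hq ((lt_div_iff₀' hq').2 hp) m]
  refine ⟨below, above, fun n => ?_⟩
  rcases lt_trichotomy n 0 with hn | rfl | hn
  · convert increment (-n) 0 (by omega) using 1
    rw [← abs_neg, zero_sub, neg_neg, Int.cast_neg]
    ring_nf
  · simp
  · simpa using increment n n hn

theorem stmt18 (x : ℤ → ℝ) (ω : ℝ)
    (hBirk : ∀ q p : ℤ, (∀ n : ℤ, x (n - q) + p ≤ x n) ∨ (∀ n : ℤ, x n ≤ x (n - q) + p))
    (hmeanp : Filter.Tendsto (fun n : ℕ => (x n - x 0) / n) Filter.atTop (nhds ω))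
    (hmeanm : Filter.Tendsto (fun n : ℕ => (x (-(n : ℤ)) - x 0) / (-(n : ℝ)))
      Filter.atTop (nhds ω)) :
    (∀ p q : ℤ, 0 < q → (p : ℝ) / q < ω → ∀ n : ℤ, x (n - q) + p ≤ x n) ∧
      (∀ p q : ℤ, 0 < q → ω < (p : ℝ) / q → ∀ n : ℤ, x n ≤ x (n - q) + p) ∧
      (∀ n : ℤ, |x n - x 0 - n * ω| ≤ 1) :=
  stmt18_general x ω hBirk hmeanp
end
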